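/- arXiv:1212.3872 — 9 statements merged into one kernel-verified Lean document; each statement's English description precedes it below -/
import Mathlib

section
/- For every continuous Markov kernel (M, Σ, θ), every rational ε ≥ 0 and every CML formula φ, the extension ⟦φ⟧_ε = {m ∈ M : m ⊨_ε φ} is a measurable set, i.e., ⟦φ⟧_ε ∈ Σ. -/
open MeasureTheory Set
open scoped ENNReal NNReal

/-- Formulae of Continuous Markovian Logic (CML):
`φ ::= ⊤ | ¬φ | φ ∧ φ | L_r φ` with `r` a nonnegative rational. -/
inductive CML : Type
  | top : CML
  | neg : CML → CML
  | and : CML → CML → CML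
  | L : NNRat → CML → CML

namespace CML

/-- Derived falsity `⊥ = ¬⊤`. -/
def bot : CML := neg top

/-- Derived disjunction `φ ∨ ψ = ¬(¬φ ∧ ¬ψ)`. -/
def or (φ ψ : CML) : CML := neg (and (neg φ) (neg ψ))

/-- Derived implication `φ → ψ = ¬(φ ∧ ¬ψ)`. -/
def imp (φ ψ : CML) : CML := neg (and φ (neg ψ))

/-- The positive fragment `L⁺`, generated by `ψ ::= ⊤ | ψ∧ψ | ψ∨ψ | L_r ψ`. -/
inductive Pos : CML → Prop
  | top : Pos top
  | and {φ ψ : CML} : Pos φ → Pos ψ → Pos (and φ ψ)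
  | or {φ ψ : CML} : Pos φ → Pos ψ → Pos (or φ ψ)
  | L {φ : CML} (r : NNRat) : Pos φ → Pos (L r φ)

/-- The negative fragment `L⁻ = {¬φ : φ ∈ L⁺}`. -/
def NegF (φ : CML) : Prop := ∃ ψ : CML, Pos ψ ∧ φ = neg ψ

end CML

/-- The ε-satisfiability relation on a continuous Markov kernel with transition function `θ`:
`m ⊨_ε L_r φ` iff `θ(m)(⟦φ⟧_ε) + ε ≥ r`. -/
def sat {M : Type*} [MeasurableSpace M] (θ : M → Measure M) (ε : NNRat) :
    M → CML → Prop
  | _, CML.top => True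
  | m, CML.neg φ => ¬ sat θ ε m φ
  | m, CML.and φ ψ => sat θ ε m φ ∧ sat θ ε m ψ
  | m, CML.L r φ => ((r : ℝ≥0) : ℝ≥0∞) ≤ θ m {n | sat θ ε n φ} + ((ε : ℝ≥0) : ℝ≥0∞)

/-- A set `C` is `R`-closed iff `C^R ⊆ C`, where `C^R = {x | ∃ c ∈ C, (c,x) ∈ R}`. -/
def closR {M : Type*} (R : M → M → Prop) (C : Set M) : Set M := {x | ∃ c ∈ C, R c x}

def RClosed {M : Type*} (R : M → M → Prop) (C : Set M) : Prop := closR R C ⊆ C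

/-- `R` is a stochastic bisimulation: related states assign equal measure to every
measurable `R`-closed set. -/
def IsBisim {M : Type*} [MeasurableSpace M] (θ : M → Measure M) (R : M → M → Prop) : Prop :=
  ∀ m n : M, R m n → ∀ C : Set M, MeasurableSet C → RClosed R C → θ m C = θ n C

/-- Stochastic bisimilarity: being related by some stochastic bisimulation. -/
def Bisim {M : Type*} [MeasurableSpace M] (θ : M → Measure M) (m n : M) : Prop :=
  ∃ R : M → M → Prop, IsBisim θ R ∧ R m n
/-- The encoding `⟨·⟩_ε`, lowering all modal indices: `⟨L_r φ⟩_ε = L_{r ∸ ε} ⟨φ⟩_ε`. -/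
def lowE (ε : NNRat) : CML → CML
  | CML.top => CML.top
  | CML.neg φ => CML.neg (lowE ε φ)
  | CML.and φ ψ => CML.and (lowE ε φ) (lowE ε ψ)
  | CML.L r φ => CML.L (r - ε) (lowE ε φ)

/-- The encoding `⟨·⟩^ε`, raising all modal indices: `⟨L_r φ⟩^ε = L_{r+ε} ⟨φ⟩^ε`. -/
def upE (ε : NNRat) : CML → CML
  | CML.top => CML.top
  | CML.neg φ => CML.neg (upE ε φ)
  | CML.and φ ψ => CML.and (upE ε φ) (upE ε ψ)
  | CML.L r φ => CML.L (r + ε) (upE ε φ)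

/-- Every modal index `r` occurring in a subformula `L_r ψ` of `φ` satisfies `r ≥ ε`. -/
def IndGe (ε : NNRat) : CML → Prop
  | CML.top => True
  | CML.neg φ => IndGe ε φ
  | CML.and φ ψ => IndGe ε φ ∧ IndGe ε ψ
  | CML.L r φ => ε ≤ r ∧ IndGe ε φ

/-- Boolean evaluation of a formula, treating modal formulae `L_r φ` as atoms. -/
def evalB (v : CML → Bool) : CML → Bool
  | CML.top => true
  | CML.neg φ => !(evalB v φ)
  | CML.and φ ψ => evalB v φ && evalB v ψ
  | CML.L r φ => v (CML.L r φ)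

/-- Propositional tautologies (with modal subformulae regarded as atoms). -/
def Taut (φ : CML) : Prop := ∀ v : CML → Bool, evalB v φ = true

/-- The ε-provability relation `⊢_ε`: classical propositional logic together with
(A1)-(A4), (R1)-(R3). -/
inductive Prov (ε : NNRat) : CML → Prop
  | taut {φ : CML} : Taut φ → Prov ε φ
  | mp {φ ψ : CML} : Prov ε (φ.imp ψ) → Prov ε φ → Prov ε ψ
  | a1 (φ : CML) : Prov ε (CML.L ε φ)
  | a2 (r s : NNRat) (φ : CML) : Prov ε ((CML.L (r + s) φ).imp (CML.L r φ))
  | a3 (r s : NNRat) (φ ψ : CML) :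
      Prov ε (((CML.L r (φ.and ψ)).and (CML.L s (φ.and ψ.neg))).imp (CML.L (r + s - ε) φ))
  | a4 (r s : NNRat) (φ ψ : CML) :
      Prov ε ((((CML.L r (φ.and ψ)).neg).and ((CML.L s (φ.and ψ.neg)).neg)).imp
        ((CML.L (r + s - ε) φ).neg))
  | r1 {φ ψ : CML} (r : NNRat) : Prov ε (φ.imp ψ) → Prov ε ((CML.L r φ).imp (CML.L r ψ))
  | r2 {φ : CML} (s : NNRat) : (∀ r : NNRat, r < s → Prov ε (CML.L r φ)) →
      Prov ε (CML.L s φ)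
  | r3 {φ : CML} (s : NNRat) : (∀ r : NNRat, r > s → Prov ε (CML.L r φ)) →
      Prov ε CML.bot

/-- ε-validity: `φ` holds at every state of every continuous Markov kernel, i.e. of every
analytic Borel space with a measurable transition function assigning finite measures. -/
def Valid (ε : NNRat) (φ : CML) : Prop :=
  ∀ (M : Type) [TopologicalSpace M] [MeasurableSpace M] [BorelSpace M],
    AnalyticSet (univ : Set M) →
      ∀ θ : M → Measure M, Measurable θ → (∀ m : M, θ m univ ≠ ∞) →
        ∀ m : M, sat θ ε m φ

/-- `R` is closed under stochastic bisimilarity. -/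
def ClosedUnderBisim {M : Type*} [MeasurableSpace M] (θ : M → Measure M)
    (R : M → M → Prop) : Prop :=
  ∀ m n m' n' : M, R m n → Bisim θ m m' → Bisim θ n n' → R m' n'

/-- `R` is an ε-behavioral order: it is closed under bisimilarity and whenever `m R n`,
`θ(n)(C) − θ(m)(C^R) ≤ ε` for every `C` in the bisimulation generator
`G_M = {⟦φ⟧_0 : φ ∈ L⁺}`. -/
def IsEpsOrder {M : Type*} [MeasurableSpace M] (θ : M → Measure M) (ε : NNRat)
    (R : M → M → Prop) : Prop :=
  ClosedUnderBisim θ R ∧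
    ∀ m n : M, R m n → ∀ φ : CML, CML.Pos φ →
      θ n {x | sat θ 0 x φ} ≤ θ m (closR R {x | sat θ 0 x φ}) + ((ε : ℝ≥0) : ℝ≥0∞)

/-- `m ≺_ε n`: the largest ε-behavioral order. -/
def prec {M : Type*} [MeasurableSpace M] (θ : M → Measure M) (ε : NNRat) (m n : M) : Prop :=
  ∃ R : M → M → Prop, IsEpsOrder θ ε R ∧ R m n

/-- `R` is an essential ε-behavioral order: it is closed under bisimilarity and whenever
`m R n`, `θ(n)(C) − θ(m)(C^R) ∈ [0, ε]` for every `C` in the extended bisimulation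
generator `\overline{G_M} = {⟦φ⟧_0 : φ ∈ L}`. -/
def IsEssEpsOrder {M : Type*} [MeasurableSpace M] (θ : M → Measure M) (ε : NNRat)
    (R : M → M → Prop) : Prop :=
  ClosedUnderBisim θ R ∧
    ∀ m n : M, R m n → ∀ φ : CML,
      θ m (closR R {x | sat θ 0 x φ}) ≤ θ n {x | sat θ 0 x φ} ∧
      θ n {x | sat θ 0 x φ} ≤ θ m (closR R {x | sat θ 0 x φ}) + ((ε : ℝ≥0) : ℝ≥0∞)

/-- `m ≺⁺_ε n`: the largest essential ε-behavioral order. -/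
def precP {M : Type*} [MeasurableSpace M] (θ : M → Measure M) (ε : NNRat) (m n : M) : Prop :=
  ∃ R : M → M → Prop, IsEssEpsOrder θ ε R ∧ R m n

/-- The encoding `|·|_ε` on formulae in disjunctive normal form (with `L_r φ` treated as
atoms): `DNFEnc ε φ φ'` means `φ` is in disjunctive normal form and `φ' = |φ|_ε`. -/
inductive DNFEnc (ε : NNRat) : CML → CML → Prop
  | top : DNFEnc ε CML.top CML.top
  | bot : DNFEnc ε CML.bot CML.bot
  | L {ψ ψ' : CML} (r : NNRat) : DNFEnc ε ψ ψ' → DNFEnc ε (CML.L r ψ) (CML.L r ψ')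
  | negL {ψ ψ' : CML} (r : NNRat) :
      DNFEnc ε ψ ψ' → DNFEnc ε ((CML.L r ψ).neg) ((CML.L (r + ε) ψ').neg)
  | and {φ φ' χ χ' : CML} :
      DNFEnc ε φ φ' → DNFEnc ε χ χ' → DNFEnc ε (φ.and χ) (φ'.and χ')
  | or {φ φ' χ χ' : CML} :
      DNFEnc ε φ φ' → DNFEnc ε χ χ' → DNFEnc ε (CML.or φ χ) (CML.or φ' χ')

/-- The behavioural distance `d(m,n) = inf {ε | m ≺_ε n and n ≺_ε m}`. -/
noncomputable def bdist {M : Type*} [MeasurableSpace M] (θ : M → Measure M)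
    (m n : M) : ℝ≥0 :=
  sInf {x : ℝ≥0 | ∃ ε : NNRat, x = (ε : ℝ≥0) ∧ prec θ ε m n ∧ prec θ ε n m}

theorem measurableSet_setOf_le_measure_add {α β : Type*} [MeasurableSpace α] [MeasurableSpace β]
    {θ : α → Measure β} (hθ : Measurable θ) {s : Set β} (hs : MeasurableSet s) (a b : ℝ≥0∞) :
    MeasurableSet {x | a ≤ θ x s + b} :=
  ((Measure.measurable_coe hs).comp hθ).add_const b measurableSet_Ici

theorem extension_measurable_general {M : Type*} [MeasurableSpace M]
    (θ : M → Measure M) (hθ : Measurable θ)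
    (ε : NNRat) (φ : CML) :
    MeasurableSet {m : M | sat θ ε m φ} := by
  induction φ with
  | top => exact MeasurableSet.univ
  | neg φ ih => exact ih.compl
  | and φ ψ ihφ ihψ => exact ihφ.inter ihψ
  | L r φ ih => exact measurableSet_setOf_le_measure_add hθ ih _ _

/-- for every CMK, rational ε ≥ 0 and CML formula φ,
the extension ⟦φ⟧_ε is measurable. -/
theorem extension_measurable {M : Type*} [TopologicalSpace M] [MeasurableSpace M] [BorelSpace M]
    (hA : AnalyticSet (univ : Set M))
    (θ : M → Measure M) (hθ : Measurable θ) (hfin : ∀ m : M, θ m univ ≠ ∞)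
    (ε : NNRat) (φ : CML) :
    MeasurableSet {m : M | sat θ ε m φ} :=
  extension_measurable_general θ hθ ε φ
end

section
/- For every state m of a continuous Markov kernel, every formula φ in the positive fragment L⁺, and arbitrary rationals ε, ε' ≥ 0: if m ⊨_ε φ then m ⊨_{ε+ε'} φ. In particular, m ⊨_0 φ implies m ⊨_ε φ for every rational ε ≥ 0. -/
open MeasureTheory Set
open scoped ENNReal NNReal

theorem sat_or {M : Type*} [MeasurableSpace M] (θ : M → Measure M) (ε : NNRat) (m : M)
    (φ ψ : CML) : sat θ ε m (φ.or ψ) ↔ sat θ ε m φ ∨ sat θ ε m ψ := by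
  simp only [CML.or, sat, not_and_or, not_not]

theorem sat_mono_of_pos {M : Type*} [MeasurableSpace M] (θ : M → Measure M) {φ : CML}
    (hφ : CML.Pos φ) {ε δ : NNRat} (hεδ : ε ≤ δ) (m : M) :
    sat θ ε m φ → sat θ δ m φ := by
  induction hφ generalizing m with
  | top => exact id
  | and _ _ ihφ ihψ => exact And.imp (ihφ m) (ihψ m)
  | or _ _ ihφ ihψ =>
    simpa only [sat_or] using Or.imp (ihφ m) (ihψ m)
  | @L ψ r _ ih =>
    intro h
    calc ((r : ℝ≥0) : ℝ≥0∞) ≤ θ m {n | sat θ ε n ψ} + ((ε : ℝ≥0) : ℝ≥0∞) := h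
      _ ≤ θ m {n | sat θ δ n ψ} + ((δ : ℝ≥0) : ℝ≥0∞) := by
        gcongr
        exact ih _

theorem sat_pos_mono_general {M : Type*} [MeasurableSpace M]
    (θ : M → Measure M)
    (φ : CML) (hφ : CML.Pos φ) (ε ε' : NNRat) (m : M) :
    (sat θ ε m φ → sat θ (ε + ε') m φ) ∧ (sat θ 0 m φ → sat θ ε m φ) :=
  ⟨sat_mono_of_pos θ hφ le_self_add m, sat_mono_of_pos θ hφ zero_le m⟩

/-- for φ ∈ L⁺, ε-satisfaction is monotone in ε. -/
theorem sat_pos_mono {M : Type*} [TopologicalSpace M] [MeasurableSpace M] [BorelSpace M]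
    (hA : AnalyticSet (univ : Set M))
    (θ : M → Measure M) (hθ : Measurable θ) (hfin : ∀ m : M, θ m univ ≠ ∞)
    (φ : CML) (hφ : CML.Pos φ) (ε ε' : NNRat) (m : M) :
    (sat θ ε m φ → sat θ (ε + ε') m φ) ∧ (sat θ 0 m φ → sat θ ε m φ) :=
  sat_pos_mono_general θ φ hφ ε ε' m
end

section
/- For every state m of a continuous Markov kernel, every formula φ in the negative fragment L⁻, and arbitrary rationals ε, ε' ≥ 0: if m ⊨_{ε+ε'} φ then m ⊨_ε φ. Equivalently, for φ ∈ L⁻ the sets ⟦φ⟧_ε are decreasing in ε. -/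
open MeasureTheory Set
open scoped ENNReal NNReal

namespace CML

variable {M : Type*} [MeasurableSpace M] (θ : M → Measure M)

theorem Pos.monotone_setOf_sat {φ : CML} (hφ : φ.Pos) :
    Monotone fun ε => {x : M | sat θ ε x φ} := by
  intro ε₁ ε₂ hε
  induction hφ with
  | top => exact subset_rfl
  | and _ _ ihφ ihψ => exact fun _ hx => ⟨ihφ hx.1, ihψ hx.2⟩
  | or _ _ ihφ ihψ =>
    intro x hx
    simp only [mem_ofPred_eq, CML.or, sat, not_and_or, not_not] at hx ⊢
    exact hx.imp (@ihφ x) (@ihψ x)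
  | L r _ ih =>
    intro x hx
    calc ((r : ℝ≥0) : ℝ≥0∞) ≤ θ x {y | sat θ ε₁ y _} + ((ε₁ : ℝ≥0) : ℝ≥0∞) := hx
      _ ≤ θ x {y | sat θ ε₂ y _} + ((ε₂ : ℝ≥0) : ℝ≥0∞) := by gcongr

theorem NegF.antitone_setOf_sat {φ : CML} (hφ : φ.NegF) :
    Antitone fun ε => {x : M | sat θ ε x φ} := by
  obtain ⟨ψ, hψ, rfl⟩ := hφ
  exact fun _ _ hε => compl_subset_compl.mpr (hψ.monotone_setOf_sat θ hε)

end CML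

theorem sat_neg_anti_general {M : Type*} [MeasurableSpace M]
    (θ : M → Measure M)
    (φ : CML) (hφ : CML.NegF φ) (ε ε' : NNRat) (m : M) :
    (sat θ (ε + ε') m φ → sat θ ε m φ) ∧
    (∀ ε₁ ε₂ : NNRat, ε₁ ≤ ε₂ → {x : M | sat θ ε₂ x φ} ⊆ {x : M | sat θ ε₁ x φ}) :=
  ⟨fun hm => hφ.antitone_setOf_sat θ le_self_add hm, fun _ _ h => hφ.antitone_setOf_sat θ h⟩

/-- for φ ∈ L⁻, ε-satisfaction is antitone in ε;
equivalently the extensions ⟦φ⟧_ε are decreasing in ε. -/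
theorem sat_neg_anti {M : Type*} [TopologicalSpace M] [MeasurableSpace M] [BorelSpace M]
    (hA : AnalyticSet (univ : Set M))
    (θ : M → Measure M) (hθ : Measurable θ) (hfin : ∀ m : M, θ m univ ≠ ∞)
    (φ : CML) (hφ : CML.NegF φ) (ε ε' : NNRat) (m : M) :
    (sat θ (ε + ε') m φ → sat θ ε m φ) ∧
    (∀ ε₁ ε₂ : NNRat, ε₁ ≤ ε₂ → {x : M | sat θ ε₂ x φ} ⊆ {x : M | sat θ ε₁ x φ}) :=
  sat_neg_anti_general θ φ hφ ε ε' m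
end

section
/- For every rational ε > 0 there exist a continuous Markov process (M, m) and a formula φ ∈ L⁻ such that m ⊨_0 φ but m ⊭_ε φ. Concretely, taking the one-state CMK with θ(m)({m}) = r, one has m ⊨_0 ¬L_{r+δ}⊤ for every rational δ > 0, while it is not the case that m ⊨_ε ¬L_{r+δ}⊤ for every rational δ > 0 when ε > 0. -/
open MeasureTheory Set
open scoped ENNReal NNReal

theorem sat_neg_L_top_iff {M : Type*} [MeasurableSpace M] (θ : M → Measure M) (ε s : NNRat)
    (m : M) :
    sat θ ε m (CML.L s CML.top).neg ↔
      θ m univ + ((ε : ℝ≥0) : ℝ≥0∞) < ((s : ℝ≥0) : ℝ≥0∞) := by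
  simp only [sat, ofPred_true, not_le]

theorem sat_neg_L_add_top_iff (r ε δ : NNRat) :
    sat (fun _ : Unit => ((r : ℝ≥0) : ℝ≥0∞) • Measure.dirac ()) ε ()
      (CML.L (r + δ) CML.top).neg ↔ ε < δ := by
  rw [sat_neg_L_top_iff, Measure.smul_apply, measure_univ, smul_eq_mul, mul_one,
    NNRat.cast_add, ENNReal.coe_add, ENNReal.add_lt_add_iff_left ENNReal.coe_ne_top,
    ENNReal.coe_lt_coe, NNRat.cast_lt]

/-- for every rational ε > 0 there is a CMP and a formula φ ∈ L⁻ with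
m ⊨_0 φ but m ⊭_ε φ; concretely, the one-state CMK with θ(m)({m}) = r satisfies
m ⊨_0 ¬L_{r+δ}⊤ for every δ > 0 but not m ⊨_ε ¬L_{r+δ}⊤ for every δ > 0. -/
theorem neg_sat_not_mono (ε : NNRat) (hε : 0 < ε) (r : NNRat) :
    (∀ δ : NNRat, 0 < δ →
      sat (fun _ : Unit => ((r : ℝ≥0) : ℝ≥0∞) • Measure.dirac ()) 0 ()
        ((CML.L (r + δ) CML.top).neg)) ∧
    ¬ (∀ δ : NNRat, 0 < δ →
      sat (fun _ : Unit => ((r : ℝ≥0) : ℝ≥0∞) • Measure.dirac ()) ε ()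
        ((CML.L (r + δ) CML.top).neg)) ∧
    ∃ φ : CML, CML.NegF φ ∧
      sat (fun _ : Unit => ((r : ℝ≥0) : ℝ≥0∞) • Measure.dirac ()) 0 () φ ∧
      ¬ sat (fun _ : Unit => ((r : ℝ≥0) : ℝ≥0∞) • Measure.dirac ()) ε () φ := by
  have sat_zero : ∀ δ : NNRat, 0 < δ →
      sat (fun _ : Unit => ((r : ℝ≥0) : ℝ≥0∞) • Measure.dirac ()) 0 ()
        ((CML.L (r + δ) CML.top).neg) :=
    fun δ hδ => (sat_neg_L_add_top_iff r 0 δ).2 hδ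
  have not_sat_eps : ¬ sat (fun _ : Unit => ((r : ℝ≥0) : ℝ≥0∞) • Measure.dirac ()) ε ()
      ((CML.L (r + ε) CML.top).neg) :=
    fun h => lt_irrefl ε ((sat_neg_L_add_top_iff r ε ε).1 h)
  exact ⟨sat_zero, fun h => not_sat_eps (h ε hε),
    (CML.L (r + ε) CML.top).neg, ⟨_, CML.Pos.L _ CML.Pos.top, rfl⟩, sat_zero ε hε, not_sat_eps⟩
end

section
/- For every state m of a continuous Markov kernel, every CML formula φ ∈ L, and arbitrary rationals ε, ε' ≥ 0: m ⊨_{ε+ε'} φ if and only if m ⊨_ε ⟨φ⟩_{ε'}. -/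
open MeasureTheory Set
open scoped ENNReal NNReal

theorem NNRat.cast_tsub (r s : ℚ≥0) : ((r - s : ℚ≥0) : ℝ≥0) = r - s := by
  rcases le_total s r with h | h
  · conv_rhs => rw [← tsub_add_cancel_of_le h, NNRat.cast_add, add_tsub_cancel_right]
  · rw [tsub_eq_zero_of_le h, tsub_eq_zero_of_le (by exact_mod_cast h), NNRat.cast_zero]

theorem nnratCast_le_add_add_iff_tsub_le (r ε ε' : ℚ≥0) (a : ℝ≥0∞) :
    ((r : ℝ≥0) : ℝ≥0∞) ≤ a + ((ε + ε' : ℚ≥0) : ℝ≥0) ↔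
      (((r - ε' : ℚ≥0) : ℝ≥0) : ℝ≥0∞) ≤ a + (ε : ℝ≥0) := by
  rw [NNRat.cast_tsub, ENNReal.coe_sub, tsub_le_iff_right, NNRat.cast_add, ENNReal.coe_add,
    add_assoc]

theorem sat_lowE_general {M : Type*} [MeasurableSpace M]
    (θ : M → Measure M)
    (φ : CML) (ε ε' : NNRat) (m : M) :
    sat θ (ε + ε') m φ ↔ sat θ ε m (lowE ε' φ) := by
  induction φ generalizing m with
  | top => exact Iff.rfl
  | neg φ ih => exact not_congr (ih m)
  | and φ ψ ihφ ihψ => exact and_congr (ihφ m) (ihψ m)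
  | L r φ ih =>
    have hsets : {n | sat θ (ε + ε') n φ} = {n | sat θ ε n (lowE ε' φ)} := Set.ext ih
    simp only [sat, lowE, hsets]
    exact nnratCast_le_add_add_iff_tsub_le r ε ε' _

/-- m ⊨_{ε+ε'} φ iff m ⊨_ε ⟨φ⟩_{ε'}. -/
theorem sat_lowE {M : Type*} [TopologicalSpace M] [MeasurableSpace M] [BorelSpace M]
    (hA : AnalyticSet (univ : Set M))
    (θ : M → Measure M) (hθ : Measurable θ) (hfin : ∀ m : M, θ m univ ≠ ∞)
    (φ : CML) (ε ε' : NNRat) (m : M) :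
    sat θ (ε + ε') m φ ↔ sat θ ε m (lowE ε' φ) :=
  sat_lowE_general θ φ ε ε' m
end

section
/- For every state m of a continuous Markov kernel, every CML formula φ ∈ L, and arbitrary rationals ε, ε' ≥ 0: m ⊨_ε φ if and only if m ⊨_{ε+ε'} ⟨φ⟩^{ε'}. -/
open MeasureTheory Set
open scoped ENNReal NNReal

theorem sat_upE_general {M : Type*} [MeasurableSpace M]
    (θ : M → Measure M)
    (φ : CML) (ε ε' : NNRat) (m : M) :
    sat θ ε m φ ↔ sat θ (ε + ε') m (upE ε' φ) := by
  induction φ generalizing m with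
  | top => rfl
  | neg φ ih => exact not_congr (ih m)
  | and φ ψ ihφ ihψ => exact and_congr (ihφ m) (ihψ m)
  | L r φ ih =>
    have hset : {n | sat θ ε n φ} = {n | sat θ (ε + ε') n (upE ε' φ)} := Set.ext ih
    simp only [sat, upE, hset, NNRat.cast_add, ENNReal.coe_add, ← add_assoc]
    exact (ENNReal.add_le_add_iff_right ENNReal.coe_ne_top).symm

/-- m ⊨_ε φ iff m ⊨_{ε+ε'} ⟨φ⟩^{ε'}. -/
theorem sat_upE {M : Type*} [TopologicalSpace M] [MeasurableSpace M] [BorelSpace M]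
    (hA : AnalyticSet (univ : Set M))
    (θ : M → Measure M) (hθ : Measurable θ) (hfin : ∀ m : M, θ m univ ≠ ∞)
    (φ : CML) (ε ε' : NNRat) (m : M) :
    sat θ ε m φ ↔ sat θ (ε + ε') m (upE ε' φ) :=
  sat_upE_general θ φ ε ε' m
end

section
/- For every state m of a continuous Markov kernel, every CML formula φ ∈ L, and every rational ε ≥ 0: (1) m ⊨_ε φ if and only if m ⊨_0 ⟨φ⟩_ε, and (2) m ⊨_0 φ if and only if m ⊨_ε ⟨φ⟩^ε. -/
open MeasureTheory Set
open scoped ENNReal NNReal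

/- Induction on `φ`: only the modal case does anything, and there the threshold test
`r ≤ θ(m)(⟦φ⟧) + ε` is just rearranged, as `r ∸ ε ≤ θ(m)(⟦φ⟧)` for `⟨·⟩_ε` and as
`r + ε ≤ θ(m)(⟦φ⟧) + ε` for `⟨·⟩^ε`. -/

theorem NNRat.cast_tsub_nnreal (r ε : ℚ≥0) : ((r - ε : ℚ≥0) : ℝ≥0) = (r : ℝ≥0) - ε := by
  rcases le_total ε r with h | h
  · exact eq_tsub_of_add_eq (by rw [← NNRat.cast_add, tsub_add_cancel_of_le h])
  · simp [tsub_eq_zero_of_le h, tsub_eq_zero_of_le (NNRat.cast_le.mpr h : (r : ℝ≥0) ≤ ε)]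

section Encodings

variable {M : Type*} [MeasurableSpace M] (θ : M → Measure M)

theorem sat_zero_L (r : ℚ≥0) (φ : CML) (m : M) :
    sat θ 0 m (CML.L r φ) ↔ ((r : ℝ≥0) : ℝ≥0∞) ≤ θ m {n | sat θ 0 n φ} := by
  simp [sat]

theorem sat_iff_sat_zero_lowE (ε : ℚ≥0) (φ : CML) (m : M) :
    sat θ ε m φ ↔ sat θ 0 m (lowE ε φ) := by
  induction φ generalizing m with
  | top => exact Iff.rfl
  | neg φ ih => exact not_congr (ih m)
  | and φ ψ ihφ ihψ => exact and_congr (ihφ m) (ihψ m)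
  | L r φ ih =>
    have hsets : {n | sat θ ε n φ} = {n | sat θ 0 n (lowE ε φ)} := Set.ext ih
    rw [lowE, sat_zero_L, ← hsets, NNRat.cast_tsub_nnreal, ENNReal.coe_sub,
      tsub_le_iff_right]
    rfl

theorem sat_zero_iff_sat_upE (ε : ℚ≥0) (φ : CML) (m : M) :
    sat θ 0 m φ ↔ sat θ ε m (upE ε φ) := by
  induction φ generalizing m with
  | top => exact Iff.rfl
  | neg φ ih => exact not_congr (ih m)
  | and φ ψ ihφ ihψ => exact and_congr (ihφ m) (ihψ m)
  | L r φ ih =>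
    have hsets : {n | sat θ 0 n φ} = {n | sat θ ε n (upE ε φ)} := Set.ext ih
    rw [sat_zero_L, upE, sat, ← hsets, NNRat.cast_add, ENNReal.coe_add,
      ENNReal.add_le_add_iff_right ENNReal.coe_ne_top]

end Encodings

theorem sat_classic_vs_eps_general {M : Type*} [MeasurableSpace M]
    (θ : M → Measure M)
    (φ : CML) (ε : NNRat) (m : M) :
    (sat θ ε m φ ↔ sat θ 0 m (lowE ε φ)) ∧
    (sat θ 0 m φ ↔ sat θ ε m (upE ε φ)) :=
  ⟨sat_iff_sat_zero_lowE θ ε φ m, sat_zero_iff_sat_upE θ ε φ m⟩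

/-- m ⊨_ε φ iff m ⊨_0 ⟨φ⟩_ε, and m ⊨_0 φ iff m ⊨_ε ⟨φ⟩^ε. -/
theorem sat_classic_vs_eps {M : Type*} [TopologicalSpace M] [MeasurableSpace M] [BorelSpace M]
    (hA : AnalyticSet (univ : Set M))
    (θ : M → Measure M) (hθ : Measurable θ) (hfin : ∀ m : M, θ m univ ≠ ∞)
    (φ : CML) (ε : NNRat) (m : M) :
    (sat θ ε m φ ↔ sat θ 0 m (lowE ε φ)) ∧
    (sat θ 0 m φ ↔ sat θ ε m (upE ε φ)) :=
  sat_classic_vs_eps_general θ φ ε m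
end

section
/- For every CML formula φ ∈ L and rationals ε, ε' ≥ 0: (1) ⊢_{ε+ε'} φ if and only if ⊢_ε ⟨φ⟩_{ε'}; in particular ⊢_ε φ iff ⊢_0 ⟨φ⟩_ε; (2) ⊢_ε φ if and only if ⊢_{ε+ε'} ⟨φ⟩^{ε'}; in particular ⊢_0 φ iff ⊢_ε ⟨φ⟩^ε; (3) if φ ∈ L⁺ then ⊢_{ε'} φ implies ⊢_{ε+ε'} φ. -/
open MeasureTheory Set
open scoped ENNReal NNReal

/-!
The encodings only shift the indices of the modal operators, so they commute with the Boolean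
connectives and preserve tautologies. Shifting by `ε'` is compatible with the axioms once the
slack `ε` of (A1), (A3), (A4) is shifted by `ε'` as well: an induction on derivations sends
`⊢_{ε+ε'} φ` to `⊢_ε ⟨φ⟩_{ε'}` and `⊢_ε φ` to `⊢_{ε+ε'} ⟨φ⟩^{ε'}`. These are inverse
up to provable equivalence: `⟨⟨φ⟩^{ε'}⟩_{ε'} = φ` syntactically, and `⟨⟨φ⟩_{ε'}⟩^{ε'}` differs
from `φ` only at indices `r < ε'`, where both `L_r` and `L_{ε'}` are theorems of `⊢_{ε+ε'}`.
For positive `φ`, raising indices strengthens the formula, so `⟨φ⟩^ε → φ` is a theorem.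
-/

open CML

@[simp] lemma lowE_imp (ε : NNRat) (φ ψ : CML) :
    lowE ε (φ.imp ψ) = (lowE ε φ).imp (lowE ε ψ) := rfl

@[simp] lemma upE_imp (ε : NNRat) (φ ψ : CML) :
    upE ε (φ.imp ψ) = (upE ε φ).imp (upE ε ψ) := rfl

@[simp] lemma lowE_upE (ε : NNRat) (φ : CML) : lowE ε (upE ε φ) = φ := by
  induction φ with
  | top => rfl
  | neg φ ih => simp only [upE, lowE, ih]
  | and φ ψ ih₁ ih₂ => simp only [upE, lowE, ih₁, ih₂]
  | L r φ ih => simp only [upE, lowE, ih, add_tsub_cancel_right]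

lemma evalB_map {f : CML → CML} (htop : f top = top) (hneg : ∀ φ, f φ.neg = (f φ).neg)
    (hand : ∀ φ ψ, f (φ.and ψ) = (f φ).and (f ψ)) (v : CML → Bool) (φ : CML) :
    evalB v (f φ) = evalB (fun χ => evalB v (f χ)) φ := by
  induction φ with
  | top => rw [htop]; rfl
  | neg φ ih => rw [hneg, evalB, evalB, ih]
  | and φ ψ ih₁ ih₂ => rw [hand, evalB, evalB, ih₁, ih₂]
  | L r φ => rfl

lemma Taut.map {f : CML → CML} (htop : f top = top) (hneg : ∀ φ, f φ.neg = (f φ).neg)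
    (hand : ∀ φ ψ, f (φ.and ψ) = (f φ).and (f ψ)) {φ : CML} (h : Taut φ) : Taut (f φ) :=
  fun v => (evalB_map htop hneg hand v φ).trans (h _)

namespace Prov

variable {ε : NNRat} {A A' B B' C : CML}

lemma of_taut_imp (t : Taut (A.imp B)) (h : Prov ε A) : Prov ε B := mp (taut t) h

lemma imp_refl (ε : NNRat) (A : CML) : Prov ε (A.imp A) :=
  taut fun v => by simp only [CML.imp, evalB]; grind

lemma imp_of_prov (A : CML) (h : Prov ε B) : Prov ε (A.imp B) :=
  of_taut_imp (fun v => by simp only [CML.imp, evalB]; grind) h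

lemma imp_trans (h₁ : Prov ε (A.imp B)) (h₂ : Prov ε (B.imp C)) : Prov ε (A.imp C) :=
  mp (of_taut_imp (fun v => by simp only [CML.imp, evalB]; grind) h₁) h₂

lemma contrapose (h : Prov ε (A.imp B)) : Prov ε (B.neg.imp A.neg) :=
  of_taut_imp (fun v => by simp only [CML.imp, evalB]; grind) h

lemma not_and_imp (B C : CML) (h : Prov ε A) : Prov ε ((A.neg.and B).imp C) :=
  of_taut_imp (fun v => by simp only [CML.imp, evalB]; grind) h

lemma and_not_imp (B C : CML) (h : Prov ε A) : Prov ε ((B.and A.neg).imp C) :=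
  of_taut_imp (fun v => by simp only [CML.imp, evalB]; grind) h

lemma and_imp_and (h₁ : Prov ε (A.imp A')) (h₂ : Prov ε (B.imp B')) :
    Prov ε ((A.and B).imp (A'.and B')) :=
  mp (of_taut_imp (fun v => by simp only [CML.imp, evalB]; grind) h₁) h₂

lemma or_imp_or (h₁ : Prov ε (A.imp A')) (h₂ : Prov ε (B.imp B')) :
    Prov ε ((A.or B).imp (A'.or B')) :=
  mp (of_taut_imp (fun v => by simp only [CML.imp, CML.or, evalB]; grind) h₁) h₂

lemma L_imp_L_of_le {t u : NNRat} (h : t ≤ u) (φ : CML) : Prov ε ((L u φ).imp (L t φ)) := by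
  simpa only [add_tsub_cancel_of_le h] using a2 (ε := ε) t (u - t) φ

lemma L_of_le {t : NNRat} (h : t ≤ ε) (φ : CML) : Prov ε (L t φ) :=
  mp (L_imp_L_of_le h φ) (a1 φ)

end Prov

namespace Prov

variable {ε ε' : NNRat} {φ : CML}

lemma lower (h : Prov (ε + ε') φ) : Prov ε (lowE ε' φ) := by
  induction h with
  | taut h => exact taut (h.map (f := lowE ε') rfl (fun _ => rfl) fun _ _ => rfl)
  | mp _ _ ih₁ ih₂ => exact mp ih₁ ih₂
  | a1 φ =>
    rw [lowE, add_tsub_cancel_right]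
    exact a1 _
  | a2 r s φ => exact L_imp_L_of_le (tsub_le_tsub_right le_self_add ε') _
  | a3 r s φ ψ =>
    refine imp_trans (a3 (r - ε') (s - ε') (lowE ε' φ) (lowE ε' ψ)) (L_imp_L_of_le ?_ _)
    calc r + s - (ε + ε') - ε' = r + s - (ε' + ε') - ε := by
          rw [tsub_tsub, tsub_tsub]; congr 1; ring
      _ ≤ r - ε' + (s - ε') - ε := tsub_le_tsub_right (add_tsub_add_le_tsub_add_tsub ..) ε
  | a4 r s φ ψ =>
    simp only [lowE_imp, lowE]
    rcases le_total r ε' with hr | hr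
    · exact not_and_imp _ _ (by rw [tsub_eq_zero_of_le hr]; exact L_of_le zero_le _)
    rcases le_total s ε' with hs | hs
    · exact and_not_imp _ _ (by rw [tsub_eq_zero_of_le hs]; exact L_of_le zero_le _)
    have hidx : r + s - (ε + ε') - ε' = r - ε' + (s - ε') - ε := by
      rw [tsub_add_tsub_comm hr hs, tsub_tsub, tsub_tsub]; congr 1; ring
    rw [hidx]
    exact a4 (r - ε') (s - ε') (lowE ε' φ) (lowE ε' ψ)
  | r1 r _ ih => exact r1 (r - ε') ih
  | r2 s _ ih =>
    refine r2 (s - ε') fun q hq => ?_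
    simpa only [lowE, add_tsub_cancel_right] using ih (q + ε') (lt_tsub_iff_right.mp hq)
  | @r3 φ s _ ih =>
    refine r3 (φ := lowE ε' φ) (s - ε') fun q hq => ?_
    have hlt : s < q + ε' := by
      rcases le_total ε' s with hs | hs
      · exact (tsub_lt_iff_right hs).mp hq
      · exact hs.trans_lt (lt_add_of_pos_left ε' (zero_le.trans_lt hq))
    simpa only [lowE, add_tsub_cancel_right] using ih (q + ε') hlt

lemma raise (h : Prov ε φ) : Prov (ε + ε') (upE ε' φ) := by
  induction h with
  | taut h => exact taut (h.map (f := upE ε') rfl (fun _ => rfl) fun _ _ => rfl)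
  | mp _ _ ih₁ ih₂ => exact mp ih₁ ih₂
  | a1 φ => exact a1 _
  | a2 r s φ => exact L_imp_L_of_le (add_le_add_left le_self_add ε') _
  | a3 r s φ ψ =>
    simp only [upE_imp, upE]
    rcases le_total ε (r + s) with hε | hε
    · have hidx : r + ε' + (s + ε') - (ε + ε') = r + s - ε + ε' := by
        rw [tsub_add_eq_add_tsub hε, add_add_add_comm, ← add_assoc, add_comm ε ε', ← tsub_tsub,
          add_tsub_cancel_right]
      rw [← hidx]
      exact a3 (r + ε') (s + ε') (upE ε' φ) (upE ε' ψ)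
    · rw [tsub_eq_zero_of_le hε, zero_add]
      exact imp_of_prov _ (L_of_le le_add_self _)
  | a4 r s φ ψ =>
    refine imp_trans (a4 (r + ε') (s + ε') (upE ε' φ) (upE ε' ψ))
      (contrapose (L_imp_L_of_le ?_ _))
    calc r + ε' + (s + ε') - (ε + ε') = r + s + (ε' + ε') - (ε + ε') := by
          rw [add_add_add_comm]
      _ ≤ r + s - ε + (ε' + ε' - ε') := add_tsub_add_le_tsub_add_tsub ..
      _ = r + s - ε + ε' := by rw [add_tsub_cancel_right]
  | r1 r _ ih => exact r1 (r + ε') ih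
  | r2 s _ ih =>
    refine r2 (s + ε') fun q hq => ?_
    rcases le_total q ε' with hq' | hq'
    · exact L_of_le (le_add_left hq') _
    · simpa only [upE, tsub_add_cancel_of_le hq'] using
        ih (q - ε') ((tsub_lt_iff_right hq').mpr hq)
  | @r3 φ s _ ih =>
    refine r3 (φ := upE ε' φ) (s + ε') fun q hq => ?_
    simpa only [upE, tsub_add_cancel_of_le (le_add_self.trans hq.le)] using
      ih (q - ε') (lt_tsub_iff_right.mpr hq)

lemma upE_lowE_equiv (ψ : CML) :
    Prov (ε + ε') ((upE ε' (lowE ε' ψ)).imp ψ) ∧ Prov (ε + ε') (ψ.imp (upE ε' (lowE ε' ψ))) := by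
  induction ψ with
  | top => exact ⟨imp_refl _ _, imp_refl _ _⟩
  | neg φ ih => exact ⟨contrapose ih.2, contrapose ih.1⟩
  | and φ ψ ih₁ ih₂ => exact ⟨and_imp_and ih₁.1 ih₂.1, and_imp_and ih₁.2 ih₂.2⟩
  | L r φ ih =>
    refine ⟨imp_trans (r1 _ ih.1) (L_imp_L_of_le le_tsub_add _), ?_⟩
    rcases le_total ε' r with hr | hr
    · simpa only [lowE, upE, tsub_add_cancel_of_le hr] using r1 r ih.2
    · simpa only [lowE, upE, tsub_eq_zero_of_le hr, zero_add] using
        imp_of_prov (L r φ) (L_of_le (ε := ε + ε') le_add_self (upE ε' (lowE ε' φ)))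

lemma upE_imp_of_pos (δ : NNRat) (hφ : φ.Pos) : Prov δ ((upE ε φ).imp φ) := by
  induction hφ with
  | top => exact imp_refl _ _
  | and _ _ ih₁ ih₂ => exact and_imp_and ih₁ ih₂
  | or _ _ ih₁ ih₂ => exact or_imp_or ih₁ ih₂
  | L r _ ih => exact imp_trans (r1 (r + ε) ih) (L_imp_L_of_le le_self_add _)

end Prov

section

variable {ε ε' : NNRat} {φ : CML}

theorem prov_add_iff_prov_lowE : Prov (ε + ε') φ ↔ Prov ε (lowE ε' φ) :=
  ⟨Prov.lower, fun h => Prov.mp (Prov.upE_lowE_equiv φ).1 h.raise⟩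

theorem prov_iff_prov_add_upE : Prov ε φ ↔ Prov (ε + ε') (upE ε' φ) :=
  ⟨Prov.raise, fun h => by simpa only [lowE_upE] using h.lower⟩

theorem Prov.add_of_pos (hφ : φ.Pos) (h : Prov ε' φ) : Prov (ε + ε') φ :=
  Prov.mp (Prov.upE_imp_of_pos _ hφ) (add_comm ε' ε ▸ h.raise)

end

/-- relations between the ε-provability relations via the encodings. -/
theorem prov_transfer (ε ε' : NNRat) (φ : CML) :
    (Prov (ε + ε') φ ↔ Prov ε (lowE ε' φ)) ∧
    (Prov ε φ ↔ Prov 0 (lowE ε φ)) ∧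
    (Prov ε φ ↔ Prov (ε + ε') (upE ε' φ)) ∧
    (Prov 0 φ ↔ Prov ε (upE ε φ)) ∧
    (CML.Pos φ → Prov ε' φ → Prov (ε + ε') φ) := by
  refine ⟨prov_add_iff_prov_lowE, ?_, prov_iff_prov_add_upE, ?_, Prov.add_of_pos⟩
  · simpa only [zero_add] using prov_add_iff_prov_lowE (ε := 0) (ε' := ε) (φ := φ)
  · simpa only [zero_add] using prov_iff_prov_add_upE (ε := 0) (ε' := ε) (φ := φ)
end

section
/- Logical characterization of bisimulation: for a continuous Markov kernel (M, Σ, θ) and states m, m' ∈ M, the following are equivalent: (1) m ∼ m'; (2) for every φ ∈ L, m ⊨_0 φ iff m' ⊨_0 φ; (3) for every φ ∈ L⁺, m ⊨_0 φ iff m' ⊨_0 φ. -/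
open MeasureTheory Set
open scoped ENNReal NNReal

/-!
Soundness is an induction on formulas: the extension of a formula is measurable and, by the
induction hypothesis, closed under any bisimulation, so related states give it the same measure.

For completeness, `L⁺`-equivalence is itself a bisimulation. Two `L⁺`-equivalent states satisfy
the same `L_r ψ` for every rational `r`, hence give the same measure to every `⟦ψ⟧`, `ψ ∈ L⁺`;
these sets form a π-system, so the two finite measures agree on the σ-algebra it generates. That
σ-algebra contains every measurable `L⁺`-closed set `C`: coding a state by its `L⁺`-theory, a point
of the Cantor space `2^{L⁺}` (here the countability of `L` is needed), the images of `C` and `Cᶜ`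
are disjoint analytic sets, and a Borel set separating them (Lusin) pulls back to `C`.
-/

namespace CML

def toNat : CML → ℕ
  | top => Nat.pair 0 0
  | neg φ => Nat.pair 1 φ.toNat
  | and φ ψ => Nat.pair 2 (Nat.pair φ.toNat ψ.toNat)
  | L r φ => Nat.pair 3 (Nat.pair (Encodable.encode r) φ.toNat)

theorem toNat_injective : Function.Injective toNat := by
  intro φ ψ h
  induction φ generalizing ψ <;> cases ψ <;>
    simp only [toNat, Nat.pair_eq_pair, Encodable.encode_inj] at h <;> grind

instance : Countable CML := toNat_injective.countable

end CML

namespace ENNReal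

theorem le_of_forall_nnrat_le_imp_le {a b : ℝ≥0∞}
    (h : ∀ q : ℚ≥0, ((q : ℝ≥0) : ℝ≥0∞) ≤ a → ((q : ℝ≥0) : ℝ≥0∞) ≤ b) : a ≤ b := by
  by_contra! hba
  obtain ⟨q, hq, hbq, hqa⟩ := ENNReal.lt_iff_exists_rat_btwn.1 hba
  lift q to ℚ≥0 using hq
  have hcast : ((q : ℝ≥0) : ℝ≥0∞) = (Real.toNNReal (q : ℚ) : ℝ≥0∞) := by
    congr 1; apply NNReal.eq; rw [Real.coe_toNNReal _ (by positivity)]; rfl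
  rw [← hcast] at hbq hqa
  exact (h q hqa.le).not_gt hbq

theorem eq_of_forall_nnrat_le_iff {a b : ℝ≥0∞}
    (h : ∀ q : ℚ≥0, ((q : ℝ≥0) : ℝ≥0∞) ≤ a ↔ ((q : ℝ≥0) : ℝ≥0∞) ≤ b) : a = b :=
  le_antisymm (le_of_forall_nnrat_le_imp_le fun q => (h q).1)
    (le_of_forall_nnrat_le_imp_le fun q => (h q).2)

end ENNReal

theorem MeasureTheory.AnalyticSet.image_of_measurable {X Y : Type*} [TopologicalSpace X]
    [MeasurableSpace X] [BorelSpace X] [TopologicalSpace Y] [MeasurableSpace Y]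
    [OpensMeasurableSpace Y] [SecondCountableTopology Y] (hX : AnalyticSet (univ : Set X)) {s : Set X}
    (hs : MeasurableSet s) {g : X → Y} (hg : Measurable g) : AnalyticSet (g '' s) := by
  rw [AnalyticSet] at hX
  rcases hX with hempty | ⟨f, hf, hrange⟩
  · simp [eq_empty_of_subset_empty (hempty ▸ subset_univ s), analyticSet_empty]
  · rw [← image_preimage_eq s (range_eq_univ.1 hrange), ← image_comp]
    exact (hf.measurable hs).analyticSet_image (hg.comp hf.measurable)

theorem measurableSet_generateFrom_of_rClosed {X ι : Type*} [TopologicalSpace X]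
    [MeasurableSpace X] [BorelSpace X] [Countable ι] (hX : AnalyticSet (univ : Set X))
    {S : ι → Set X} (hS : ∀ i, MeasurableSet (S i)) {C : Set X} (hC : MeasurableSet C)
    (hCl : RClosed (fun x y => ∀ i, x ∈ S i ↔ y ∈ S i) C) :
    MeasurableSet[MeasurableSpace.generateFrom (range S)] C := by
  classical
  let g : X → ι → Bool := fun x i => decide (x ∈ S i)
  have hg : Measurable[MeasurableSpace.generateFrom (range S)] g :=
    (@measurable_pi_iff X ι (fun _ => Bool) (.generateFrom (range S)) _ g).2 fun i =>
      measurable_to_bool <| by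
        have hpre : (fun x => g x i) ⁻¹' {true} = S i := by ext; simp [g]
        exact hpre ▸ MeasurableSpace.measurableSet_generateFrom (mem_range_self i)
  have hg' : Measurable g :=
    hg.mono (MeasurableSpace.generateFrom_le (forall_mem_range.2 hS)) le_rfl
  have hdisj : Disjoint (g '' C) (g '' Cᶜ) := by
    rw [disjoint_left]
    rintro _ ⟨x, hx, rfl⟩ ⟨y, hy, hyx⟩
    exact hy (hCl ⟨x, hx, fun i => by simpa [g] using (congrFun hyx i).symm⟩)
  obtain ⟨D, hCD, hDC, hD⟩ := (hX.image_of_measurable hC hg').measurablySeparable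
    (hX.image_of_measurable hC.compl hg') hdisj
  have hC_eq : C = g ⁻¹' D := by
    refine (image_subset_iff.1 hCD).antisymm fun x hx => ?_
    by_contra hxC
    exact disjoint_left.1 hDC (mem_image_of_mem g hxC) hx
  exact hC_eq ▸ hg hD

section

variable {M : Type*} [MeasurableSpace M] {θ : M → Measure M}

theorem measurableSet_sat (hθ : Measurable θ) (ε : ℚ≥0) :
    ∀ φ : CML, MeasurableSet {x | sat θ ε x φ}
  | .top => MeasurableSet.univ
  | .neg φ => (measurableSet_sat hθ ε φ).compl
  | .and φ ψ => (measurableSet_sat hθ ε φ).inter (measurableSet_sat hθ ε ψ)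
  | .L _ φ => measurableSet_le measurable_const
      (((Measure.measurable_coe (measurableSet_sat hθ ε φ)).comp hθ).add_const _)

theorem Bisim.sat_iff (hθ : Measurable θ) (ε : ℚ≥0) (φ : CML) {m n : M}
    (h : Bisim θ m n) : sat θ ε m φ ↔ sat θ ε n φ := by
  induction φ generalizing m n with
  | top => exact Iff.rfl
  | neg φ ih => exact not_congr (ih h)
  | and φ ψ ihφ ihψ => exact and_congr (ihφ h) (ihψ h)
  | L r φ ih =>
    obtain ⟨R, hR, hmn⟩ := h
    have hclosed : RClosed R {x | sat θ ε x φ} :=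
      fun x ⟨c, hc, hcx⟩ => (ih ⟨R, hR, hcx⟩).1 hc
    change _ ≤ _ + _ ↔ _ ≤ _ + _
    rw [hR m n hmn _ (measurableSet_sat hθ ε φ) hclosed]

theorem measure_sat_eq_of_forall_sat_L_iff {m n : M} {φ : CML}
    (h : ∀ r, sat θ 0 m (CML.L r φ) ↔ sat θ 0 n (CML.L r φ)) :
    θ m {x | sat θ 0 x φ} = θ n {x | sat θ 0 x φ} :=
  ENNReal.eq_of_forall_nnrat_le_iff fun r => by simpa [sat] using h r

theorem isPiSystem_range_sat_pos (ε : ℚ≥0) :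
    IsPiSystem (range fun ψ : {ψ : CML // ψ.Pos} => {x | sat θ ε x ψ}) := by
  rintro _ ⟨φ, rfl⟩ _ ⟨ψ, rfl⟩ -
  exact ⟨⟨φ.1.and ψ.1, φ.2.and ψ.2⟩, rfl⟩

def PosEquiv (θ : M → Measure M) (x y : M) : Prop :=
  ∀ ψ : {ψ : CML // ψ.Pos}, sat θ 0 x ψ ↔ sat θ 0 y ψ

theorem isBisim_posEquiv [TopologicalSpace M] [BorelSpace M] (hM : AnalyticSet (univ : Set M))
    (hθ : Measurable θ) (hfin : ∀ m : M, θ m univ ≠ ∞) : IsBisim θ (PosEquiv θ) := by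
  intro x y hxy C hC hCl
  have : IsFiniteMeasure (θ x) := ⟨(hfin x).lt_top⟩
  have hS (ψ : {ψ : CML // ψ.Pos}) : MeasurableSet {z | sat θ 0 z ψ} := measurableSet_sat hθ 0 ψ
  have hagree (ψ : {ψ : CML // ψ.Pos}) : θ x {z | sat θ 0 z ψ} = θ y {z | sat θ 0 z ψ} :=
    measure_sat_eq_of_forall_sat_L_iff fun r => hxy ⟨_, .L r ψ.2⟩
  refine ext_on_measurableSpace_of_generate_finite _ _ (forall_mem_range.2 hagree)
    (MeasurableSpace.generateFrom_le (forall_mem_range.2 hS)) rfl (isPiSystem_range_sat_pos 0) ?_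
    (measurableSet_generateFrom_of_rClosed hM hS hC hCl)
  simpa [sat] using hagree ⟨_, .top⟩

end

/-- logical characterization of bisimulation: m ∼ m' iff m and m' satisfy
the same formulae of L iff they satisfy the same formulae of L⁺ (classic semantics). -/
theorem bisim_logical_charact {M : Type*} [TopologicalSpace M] [MeasurableSpace M] [BorelSpace M]
    (hA : AnalyticSet (univ : Set M))
    (θ : M → Measure M) (hθ : Measurable θ) (hfin : ∀ m : M, θ m univ ≠ ∞)
    (m m' : M) :
    (Bisim θ m m' ↔ ∀ φ : CML, (sat θ 0 m φ ↔ sat θ 0 m' φ)) ∧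
    (Bisim θ m m' ↔ ∀ φ : CML, CML.Pos φ → (sat θ 0 m φ ↔ sat θ 0 m' φ)) := by
  have sound (h : Bisim θ m m') (φ : CML) : sat θ 0 m φ ↔ sat θ 0 m' φ := h.sat_iff hθ 0 φ
  have complete (h : ∀ φ : CML, CML.Pos φ → (sat θ 0 m φ ↔ sat θ 0 m' φ)) : Bisim θ m m' :=
    ⟨PosEquiv θ, isBisim_posEquiv hA hθ hfin, fun ψ => h ψ ψ.2⟩
  exact ⟨⟨sound, fun h => complete fun φ _ => h φ⟩, ⟨fun h φ _ => sound h φ, complete⟩⟩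
end
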